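/- Under the variable–variable block of covariance evolution with its initial conditions, for all k, s ∈ L and all y ∈ (0,1] one has 2 δ^{l_k,l_s}/(k s l̂_k l̂_s) − δ^{l_k,l_k}/(k l̂_k)² − δ^{l_s,l_s}/(s l̂_s)² = [(ε y^k − 1)/(k l̂_k) + (ε y^s − 1)/(s l̂_s)] · 1_{k≠s}. (Lemma 1, equation (10).) -/

import Mathlib

open Finset

namespace LDPC

/-- λ(y) = Σ_{k∈L} λ_k y^{k-1} -/
noncomputable def lamP (L : Finset ℕ) (lam : ℕ → ℝ) (y : ℝ) : ℝ :=
  ∑ k ∈ L, lam k * y ^ (k - 1)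

/-- λ'(y) = Σ_{k∈L} (k-1) λ_k y^{k-2} -/
noncomputable def lamD (L : Finset ℕ) (lam : ℕ → ℝ) (y : ℝ) : ℝ :=
  ∑ k ∈ L, ((k : ℝ) - 1) * lam k * y ^ (k - 2)

/-- λ''(y) = Σ_{k∈L} (k-1)(k-2) λ_k y^{k-3} -/
noncomputable def lamDD (L : Finset ℕ) (lam : ℕ → ℝ) (y : ℝ) : ℝ :=
  ∑ k ∈ L, ((k : ℝ) - 1) * ((k : ℝ) - 2) * lam k * y ^ (k - 3)

/-- ρ(z) = Σ_{k∈R} ρ_k z^{k-1} -/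
noncomputable def rhoP (R : Finset ℕ) (rho : ℕ → ℝ) (z : ℝ) : ℝ :=
  ∑ k ∈ R, rho k * z ^ (k - 1)

/-- ρ'(z) = Σ_{k∈R} (k-1) ρ_k z^{k-2} -/
noncomputable def rhoD (R : Finset ℕ) (rho : ℕ → ℝ) (z : ℝ) : ℝ :=
  ∑ k ∈ R, ((k : ℝ) - 1) * rho k * z ^ (k - 2)

/-- x = ελ(y) -/
noncomputable def xF (L : Finset ℕ) (lam : ℕ → ℝ) (ε y : ℝ) : ℝ := ε * lamP L lam y

/-- x' = ελ'(y) -/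
noncomputable def xD (L : Finset ℕ) (lam : ℕ → ℝ) (ε y : ℝ) : ℝ := ε * lamD L lam y

/-- x'' = ελ''(y) -/
noncomputable def xDD (L : Finset ℕ) (lam : ℕ → ℝ) (ε y : ℝ) : ℝ := ε * lamDD L lam y

/-- e = xy -/
noncomputable def eF (L : Finset ℕ) (lam : ℕ → ℝ) (ε y : ℝ) : ℝ := xF L lam ε y * y

/-- a = (x'y + x)/x -/
noncomputable def aF (L : Finset ℕ) (lam : ℕ → ℝ) (ε y : ℝ) : ℝ :=
  (xD L lam ε y * y + xF L lam ε y) / xF L lam ε y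

/-- l̂_k(y) = ε λ_k y^k -/
noncomputable def lhat (lam : ℕ → ℝ) (ε : ℝ) (k : ℕ) (y : ℝ) : ℝ := ε * lam k * y ^ k

/-- r̂_j(y); for j = 1 the special formula x(y-1+ρ(1-x)), else Σ_{i∈R} ρ_i C(i-1,j-1) x^j (1-x)^{i-j}. -/
noncomputable def rhat (L R : Finset ℕ) (lam rho : ℕ → ℝ) (ε : ℝ) (j : ℕ) (y : ℝ) : ℝ :=
  if j = 1 then xF L lam ε y * (y - 1 + rhoP R rho (1 - xF L lam ε y))
  else ∑ i ∈ R, rho i * ((i - 1).choose (j - 1) : ℝ) * xF L lam ε y ^ j *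
    (1 - xF L lam ε y) ^ (i - j)

/-- G_j(y) = j(r̂_{j+1} - r̂_j)/x for j ≤ d_c - 1, and G_{d_c}(y) = -d_c r̂_{d_c}/x. -/
noncomputable def Gf (L R : Finset ℕ) (lam rho : ℕ → ℝ) (ε : ℝ) (dc j : ℕ) (y : ℝ) : ℝ :=
  if j = dc then -((dc : ℝ) * rhat L R lam rho ε dc y) / xF L lam ε y
  else (j : ℝ) * (rhat L R lam rho ε (j + 1) y - rhat L R lam rho ε j y) / xF L lam ε y

/-- F(y) = Σ_{k∈L} (λ_k/k)[ε²(y^k-1)² + ε(y^k-1)] -/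
noncomputable def Ff (L : Finset ℕ) (lam : ℕ → ℝ) (ε y : ℝ) : ℝ :=
  ∑ k ∈ L, lam k / (k : ℝ) * (ε ^ 2 * (y ^ k - 1) ^ 2 + ε * (y ^ k - 1))

/-- F'(y) = 2Σ_{k∈L} ε²λ_k y^{2k-1} - (ε - ε̃)x -/
noncomputable def Fd (L : Finset ℕ) (lam : ℕ → ℝ) (ε y : ℝ) : ℝ :=
  2 * ∑ k ∈ L, ε ^ 2 * lam k * y ^ (2 * k - 1) - (ε - (1 - ε)) * xF L lam ε y

/-- V_{i,j}(y) = Σ_{s∈R} sρ_s C(s-1,i-1)C(s-1,j-1) x^{i+j} (1-x)^{2s-i-j} -/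
noncomputable def Vf (L R : Finset ℕ) (lam rho : ℕ → ℝ) (ε : ℝ) (i j : ℕ) (y : ℝ) : ℝ :=
  ∑ s ∈ R, (s : ℝ) * rho s * ((s - 1).choose (i - 1) : ℝ) * ((s - 1).choose (j - 1) : ℝ) *
    xF L lam ε y ^ (i + j) * (1 - xF L lam ε y) ^ (2 * s - i - j)

/-- The variable–variable block of covariance evolution, with its initial conditions. -/
def CEvv (L : Finset ℕ) (lam : ℕ → ℝ) (ε : ℝ) (δll : ℕ → ℕ → ℝ → ℝ) : Prop :=
  (∀ k ∈ L, ∀ s ∈ L, ∀ y ∈ Set.Ioc (0 : ℝ) 1,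
    HasDerivWithinAt (δll k s)
      (-(xF L lam ε y) *
          (((s : ℝ) * lhat lam ε s y / eF L lam ε y ^ 2) * ∑ t ∈ L, δll k t y
            + ((k : ℝ) * lhat lam ε k y / eF L lam ε y ^ 2) * ∑ t ∈ L, δll s t y
            - (((k : ℝ) + (s : ℝ)) / eF L lam ε y) * δll k s y)
        - xF L lam ε y * (k : ℝ) * (s : ℝ) * (lhat lam ε k y / eF L lam ε y) *
            ((if k = s then (1 : ℝ) else 0) - lhat lam ε s y / eF L lam ε y))
      (Set.Ioc 0 1) y)
  ∧ ∀ k ∈ L, ∀ s ∈ L,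
      δll k s 1 = (if k = s then (1 : ℝ) else 0) * (k : ℝ) * lam k * ε * (1 - ε)

/-- The variable–check block of covariance evolution, with its initial conditions. -/
def CEvc (L R : Finset ℕ) (lam rho : ℕ → ℝ) (ε : ℝ) (dc : ℕ)
    (δll δlr : ℕ → ℕ → ℝ → ℝ) : Prop :=
  (∀ k ∈ L, ∀ j ∈ Finset.Icc 1 (dc - 1), ∀ y ∈ Set.Ioc (0 : ℝ) 1,
    HasDerivWithinAt (δlr k j)
      (2 * (xD L lam ε y / eF L lam ε y) * Gf L R lam rho ε dc j y * ∑ t ∈ L, δll k t y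
        - (Gf L R lam rho ε dc j y / y ^ 2) * ∑ i ∈ L, ((i : ℝ) - 1) * δll k i y
        - xF L lam ε y * (aF L lam ε y - (k : ℝ)) * ((k : ℝ) * lhat lam ε k y / eF L lam ε y)
            * (Gf L R lam rho ε dc j y / y)
        - ((k : ℝ) * lhat lam ε k y / (eF L lam ε y * y)) * ∑ t ∈ L, δlr t j y
        + ((k : ℝ) / y) * δlr k j y
        - (j : ℝ) * (xD L lam ε y / xF L lam ε y) *
            ((if j + 1 = dc then
                (∑ t ∈ L, δll k t y) - ∑ j' ∈ Finset.Icc 1 (dc - 1), δlr k j' y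
              else δlr k (j + 1) y) - δlr k j y))
      (Set.Ioc 0 1) y)
  ∧ ∀ k ∈ L, ∀ j ∈ Finset.Icc 1 (dc - 1),
      δlr k j 1 = -((k : ℝ) * lam k * ε * (1 - ε)) * Gf L R lam rho ε dc j 1

/-- The check–check block of covariance evolution, with symmetry and initial conditions. -/
def CErr (L R : Finset ℕ) (lam rho : ℕ → ℝ) (ε : ℝ) (dc : ℕ)
    (δlr δrr : ℕ → ℕ → ℝ → ℝ) : Prop :=
  (∀ i ∈ Finset.Icc 1 (dc - 1), ∀ j ∈ Finset.Icc 1 (dc - 1), ∀ y ∈ Set.Ioc (0 : ℝ) 1,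
      δrr i j y = δrr j i y)
  ∧ (∀ i ∈ Finset.Icc 1 (dc - 1), ∀ j ∈ Finset.Icc 1 (dc - 1), ∀ y ∈ Set.Ioc (0 : ℝ) 1,
    HasDerivWithinAt (δrr i j)
      (-(xD L lam ε y / xF L lam ε y) *
          ((i : ℝ) * (if i + 1 = dc then
                (∑ k ∈ L, δlr k j y) - ∑ i' ∈ Finset.Icc 1 (dc - 1), δrr i' j y
              else δrr (i + 1) j y)
            + (j : ℝ) * (if j + 1 = dc then
                (∑ k ∈ L, δlr k i y) - ∑ i' ∈ Finset.Icc 1 (dc - 1), δrr i' i y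
              else δrr (j + 1) i y)
            - ((i : ℝ) + (j : ℝ)) * δrr i j y)
        + (∑ k ∈ L, ((2 * aF L lam ε y - (k : ℝ) - 1) / y ^ 2) *
            (δlr k j y * Gf L R lam rho ε dc i y + δlr k i y * Gf L R lam rho ε dc j y))
        - xF L lam ε y *
            (((xDD L lam ε y * xF L lam ε y - xD L lam ε y ^ 2) / xF L lam ε y ^ 2) *
                Gf L R lam rho ε dc i y * Gf L R lam rho ε dc j y
              + (i : ℝ) * (j : ℝ) * (xD L lam ε y / xF L lam ε y ^ 2) *
                  ((if i = j then rhat L R lam rho ε (j + 1) y + rhat L R lam rho ε j y else 0)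
                    - (if i = j + 1 then rhat L R lam rho ε i y else 0)
                    - (if j = i + 1 then rhat L R lam rho ε j y else 0))))
      (Set.Ioc 0 1) y)
  ∧ ∀ i ∈ Finset.Icc 1 (dc - 1), ∀ j ∈ Finset.Icc 1 (dc - 1),
      δrr i j 1 = (if i = j then (i : ℝ) * rhat L R lam rho ε i 1 else 0)
        - Vf L R lam rho ε i j 1
        + (∑ k ∈ L, ((k : ℝ) - 1) * lam k) * ε * (1 - ε) *
            Gf L R lam rho ε dc i 1 * Gf L R lam rho ε dc j 1


/-!
Scale the covariances to `D_{ks} := δ^{l_k,l_s} / (k s l̂_k l̂_s)`. Since `(k s l̂_k l̂_s)' = (k + s) k s l̂_k l̂_s / y`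
and `x / e = 1 / y`, the equation becomes
`y D_{ks}' = -(δ^{l_k,l_Σ} / (k l̂_k) + δ^{l_s,l_Σ} / (s l̂_s)) / e - 1_{k=s} / l̂_s + 1 / e`,
in which the row sums enter symmetrically in `k` and `s`. They therefore cancel in `2 D_{ks} - D_{kk} - D_{ss}`,
whose derivative is `(1 / l̂_k + 1 / l̂_s) / y` for `k ≠ s`; this is also the derivative of
`(ε y^k - 1) / (k l̂_k) + (ε y^s - 1) / (s l̂_s)`, and both sides agree at `y = 1` by the initial conditions.
-/

theorem _root_.Convex.eqOn_of_hasDerivWithinAt_eq {s : Set ℝ} {f g f' : ℝ → ℝ} {x : ℝ}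
    (hs : Convex ℝ s) (hs' : UniqueDiffOn ℝ s)
    (hf : ∀ y ∈ s, HasDerivWithinAt f (f' y) s y) (hg : ∀ y ∈ s, HasDerivWithinAt g (f' y) s y)
    (hx : x ∈ s) (hfg : f x = g x) : Set.EqOn f g s :=
  hs.eqOn_of_fderivWithin_eq (fun y hy => (hf y hy).differentiableWithinAt)
    (fun y hy => (hg y hy).differentiableWithinAt) hs'
    (fun y hy => by
      rw [(hf y hy).hasFDerivWithinAt.fderivWithin (hs' y hy),
        (hg y hy).hasFDerivWithinAt.fderivWithin (hs' y hy)])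
    hx hfg

section

variable {L : Finset ℕ} {lam : ℕ → ℝ} {ε : ℝ} {δll : ℕ → ℕ → ℝ → ℝ} {k s : ℕ} {y : ℝ}

theorem lhat_pos (hε : 0 < ε) (hlam : 0 < lam k) (hy : 0 < y) : 0 < lhat lam ε k y := by
  unfold lhat; positivity

theorem xF_pos (hε : 0 < ε) (hlam : ∀ k ∈ L, 0 < lam k) (hk : k ∈ L) (hy : 0 < y) :
    0 < xF L lam ε y :=
  mul_pos hε (sum_pos (fun i hi => mul_pos (hlam i hi) (pow_pos hy _)) ⟨k, hk⟩)

theorem hasDerivAt_lhat (lam : ℕ → ℝ) (ε : ℝ) (k : ℕ) (hy : y ≠ 0) :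
    HasDerivAt (lhat lam ε k) (k * lhat lam ε k y / y) y := by
  have h : HasDerivAt (lhat lam ε k) (ε * lam k * (k * y ^ (k - 1))) y :=
    (hasDerivAt_pow k y).const_mul _
  convert h using 1
  rcases Nat.eq_zero_or_pos k with rfl | hk
  · simp
  · rw [lhat, pow_sub₀ y hy hk, pow_one]
    field_simp

theorem hasDerivAt_div_lhat (hε : ε ≠ 0) (hlam : lam k ≠ 0) (hk : (k : ℝ) ≠ 0) (hy : y ≠ 0) :
    HasDerivAt (fun t => (ε * t ^ k - 1) / (k * lhat lam ε k t)) (1 / lhat lam ε k y / y) y := by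
  have hl : lhat lam ε k y ≠ 0 := by unfold lhat; positivity
  have h := (((hasDerivAt_pow k y).const_mul ε).sub_const 1).div
    ((hasDerivAt_lhat lam ε k hy).const_mul (k : ℝ)) (mul_ne_zero hk hl)
  refine h.congr_deriv ?_
  obtain ⟨j, rfl⟩ : ∃ j, k = j + 1 := Nat.exists_eq_succ_of_ne_zero (by exact_mod_cast hk)
  unfold lhat at hl ⊢
  rw [Nat.add_sub_cancel]
  field_simp
  ring

noncomputable def scaledCov (lam : ℕ → ℝ) (ε : ℝ) (δll : ℕ → ℕ → ℝ → ℝ) (k s : ℕ) (y : ℝ) : ℝ :=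
  δll k s y / (k * s * lhat lam ε k y * lhat lam ε s y)

theorem hasDerivWithinAt_scaledCov (hvv : CEvv L lam ε δll) (hε : 0 < ε)
    (hlam : ∀ k ∈ L, 0 < lam k) (hL : ∀ k ∈ L, 0 < k) (hk : k ∈ L) (hs : s ∈ L)
    (hy : y ∈ Set.Ioc (0 : ℝ) 1) :
    HasDerivWithinAt (scaledCov lam ε δll k s)
      (-((∑ t ∈ L, δll k t y) / (k * lhat lam ε k y)
          + (∑ t ∈ L, δll s t y) / (s * lhat lam ε s y)) / (eF L lam ε y * y)
        - ((if k = s then 1 else 0) / lhat lam ε s y - 1 / eF L lam ε y) / y)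
      (Set.Ioc 0 1) y := by
  have hy0 : y ≠ 0 := hy.1.ne'
  have hx := (xF_pos hε hlam hk hy.1).ne'
  have hlk := (lhat_pos hε (hlam k hk) hy.1).ne'
  have hls := (lhat_pos hε (hlam s hs) hy.1).ne'
  have hk0 : (k : ℝ) ≠ 0 := by exact_mod_cast (hL k hk).ne'
  have hs0 : (s : ℝ) ≠ 0 := by exact_mod_cast (hL s hs).ne'
  have hden := (((hasDerivAt_lhat lam ε k hy0).const_mul ((k : ℝ) * s)).mul
    (hasDerivAt_lhat lam ε s hy0)).hasDerivWithinAt (s := Set.Ioc 0 1)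
  refine ((hvv.1 k hk s hs y hy).div hden (by simp [*])).congr_deriv ?_
  simp only [eF, Pi.mul_apply]
  field_simp
  ring

theorem hasDerivWithinAt_scaledCov_combination (hvv : CEvv L lam ε δll)
    (hε : 0 < ε) (hlam : ∀ k ∈ L, 0 < lam k) (hL : ∀ k ∈ L, 0 < k) (hk : k ∈ L) (hs : s ∈ L)
    (hks : k ≠ s) (hy : y ∈ Set.Ioc (0 : ℝ) 1) :
    HasDerivWithinAt
      (fun t => 2 * scaledCov lam ε δll k s t - scaledCov lam ε δll k k t
        - scaledCov lam ε δll s s t)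
      (1 / lhat lam ε k y / y + 1 / lhat lam ε s y / y) (Set.Ioc 0 1) y := by
  have hks' := hasDerivWithinAt_scaledCov hvv hε hlam hL hk hs hy
  have hkk := hasDerivWithinAt_scaledCov hvv hε hlam hL hk hk hy
  have hss := hasDerivWithinAt_scaledCov hvv hε hlam hL hs hs hy
  refine (((hks'.const_mul 2).sub hkk).sub hss).congr_deriv ?_
  rw [if_neg hks, if_pos rfl, if_pos rfl]
  ring

theorem scaledCov_one (hvv : CEvv L lam ε δll) (hk : k ∈ L) (hs : s ∈ L)
    (hε : ε ≠ 0) (hlam : lam k ≠ 0) (hk0 : (k : ℝ) ≠ 0) :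
    scaledCov lam ε δll k s 1 = if k = s then (1 - ε) / (k * ε * lam k) else 0 := by
  rw [scaledCov, hvv.2 k hk s hs]
  split_ifs with hks
  · subst hks
    simp only [lhat, one_pow, mul_one]
    field_simp
  · simp

theorem scaledCov_combination_eq (hvv : CEvv L lam ε δll) (hε : 0 < ε)
    (hlam : ∀ k ∈ L, 0 < lam k) (hL : ∀ k ∈ L, 0 < k) (hk : k ∈ L) (hs : s ∈ L) (hks : k ≠ s) :
    Set.EqOn
      (fun t => 2 * scaledCov lam ε δll k s t - scaledCov lam ε δll k k t
        - scaledCov lam ε δll s s t)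
      (fun t => (ε * t ^ k - 1) / (k * lhat lam ε k t) + (ε * t ^ s - 1) / (s * lhat lam ε s t))
      (Set.Ioc 0 1) := by
  have hk0 : (k : ℝ) ≠ 0 := by exact_mod_cast (hL k hk).ne'
  have hs0 : (s : ℝ) ≠ 0 := by exact_mod_cast (hL s hs).ne'
  have hlk := (hlam k hk).ne'
  have hls := (hlam s hs).ne'
  refine (convex_Ioc (0 : ℝ) 1).eqOn_of_hasDerivWithinAt_eq (uniqueDiffOn_Ioc 0 1)
    (fun y hy => hasDerivWithinAt_scaledCov_combination hvv hε hlam hL hk hs hks hy)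
    (fun y hy => ((hasDerivAt_div_lhat hε.ne' hlk hk0 hy.1.ne').add
      (hasDerivAt_div_lhat hε.ne' hls hs0 hy.1.ne')).hasDerivWithinAt)
    ⟨one_pos, le_rfl⟩ ?_
  simp only [scaledCov_one hvv hk hs hε.ne' hlk hk0, scaledCov_one hvv hk hk hε.ne' hlk hk0,
    scaledCov_one hvv hs hs hε.ne' hls hs0, if_neg hks, ↓reduceIte, lhat, one_pow, mul_one]
  field_simp
  ring

end

theorem statement_4_general
    (L : Finset ℕ)
    (hL2 : ∀ k ∈ L, 2 ≤ k)
    (lam : ℕ → ℝ)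
    (hlamPos : ∀ k ∈ L, 0 < lam k)
    (ε : ℝ) (hε : ε ∈ Set.Ioo (0 : ℝ) 1)
    (δll : ℕ → ℕ → ℝ → ℝ) (hvv : CEvv L lam ε δll) :
    ∀ k ∈ L, ∀ s ∈ L, ∀ y ∈ Set.Ioc (0 : ℝ) 1,
      2 * δll k s y / ((k : ℝ) * (s : ℝ) * lhat lam ε k y * lhat lam ε s y)
        - δll k k y / ((k : ℝ) * lhat lam ε k y) ^ 2
        - δll s s y / ((s : ℝ) * lhat lam ε s y) ^ 2 =
        ((ε * y ^ k - 1) / ((k : ℝ) * lhat lam ε k y)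
          + (ε * y ^ s - 1) / ((s : ℝ) * lhat lam ε s y)) *
          (if k = s then (0 : ℝ) else 1) := by
  intro k hk s hs y hy
  rcases eq_or_ne k s with rfl | hks
  · rw [if_pos rfl, mul_zero]
    ring
  · have hL : ∀ k ∈ L, 0 < k := fun k hk => zero_lt_two.trans_le (hL2 k hk)
    rw [if_neg hks, mul_one]
    convert scaledCov_combination_eq hvv hε.1 hlamPos hL hk hs hks hy using 1
    unfold scaledCov
    ring

theorem statement_4
    (L R : Finset ℕ) (hL : L.Nonempty) (hR : R.Nonempty)
    (hL2 : ∀ k ∈ L, 2 ≤ k) (hR2 : ∀ k ∈ R, 2 ≤ k)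
    (lam rho : ℕ → ℝ)
    (hlamPos : ∀ k ∈ L, 0 < lam k) (hlamSum : ∑ k ∈ L, lam k = 1)
    (hrhoPos : ∀ k ∈ R, 0 < rho k) (hrhoSum : ∑ k ∈ R, rho k = 1)
    (ε : ℝ) (hε : ε ∈ Set.Ioo (0 : ℝ) 1)
    (δll : ℕ → ℕ → ℝ → ℝ) (hvv : CEvv L lam ε δll) :
    ∀ k ∈ L, ∀ s ∈ L, ∀ y ∈ Set.Ioc (0 : ℝ) 1,
      2 * δll k s y / ((k : ℝ) * (s : ℝ) * lhat lam ε k y * lhat lam ε s y)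
        - δll k k y / ((k : ℝ) * lhat lam ε k y) ^ 2
        - δll s s y / ((s : ℝ) * lhat lam ε s y) ^ 2 =
        ((ε * y ^ k - 1) / ((k : ℝ) * lhat lam ε k y)
          + (ε * y ^ s - 1) / ((s : ℝ) * lhat lam ε s y)) *
          (if k = s then (0 : ℝ) else 1) :=
  statement_4_general L hL2 lam hlamPos ε hε δll hvv

end LDPC
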